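/- Let (a,b) ⊂ ℝ with −∞ < a < b < ∞ (or half-infinite), and let μ₁ be the first nontrivial Neumann eigenvalue of −u'' + x u' = μ u on (a,b) with u'(a) = u'(b) = 0, and λ₁ the first Dirichlet eigenvalue of −v'' + x v' = λ v on (a,b) with v(a) = v(b) = 0. Then μ₁ = λ₁ + 1. -/

import Mathlib

/-!
If `u` minimizes the Neumann quotient with value `μ₁`, it solves `u'' - x u' = -μ₁ u` weakly,
with the natural boundary conditions `u'(a) = u'(b) = 0`. Hence `v = u'` is an admissible
Dirichlet function, and since `v'' - x v' = (1 - μ₁) v` its quotient is `μ₁ - 1`, so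
`λ₁ ≤ μ₁ - 1`. Conversely, if `v` minimizes the Dirichlet quotient with value `λ₁`, then
`w = x v - v'` has Gaussian mean zero and `w' = (1 + λ₁) v`; as `x - d/dx` is the adjoint of
`d/dx` for the Gaussian weight `γ`, `∫ w² γ = (1 + λ₁) ∫ v² γ`, so `μ₁ ≤ λ₁ + 1`.
The minimizers are only assumed `C¹`; the du Bois-Reymond lemma supplies the missing derivative.
-/

open intervalIntegral Set

theorem eqOn_zero_of_integral_eq_zero {f : ℝ → ℝ} {a b : ℝ} (hab : a < b) (hf : Continuous f)
    (hf₀ : 0 ≤ f) (h : ∫ x in a..b, f x = 0) : EqOn f 0 (Icc a b) := by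
  have hae : f =ᵐ[MeasureTheory.volume.restrict (Ioc a b)] 0 :=
    (integral_eq_zero_iff_of_le_of_nonneg_ae hab.le (.of_forall hf₀)
      (hf.intervalIntegrable a b)).1 h
  rw [MeasureTheory.Measure.restrict_congr_set MeasureTheory.Ioc_ae_eq_Icc] at hae
  refine MeasureTheory.Measure.eqOn_of_ae_eq hae hf.continuousOn continuousOn_const ?_
  rw [interior_Icc, closure_Ioo hab.ne]

theorem contDiff_one_of_hasDerivAt {f f' : ℝ → ℝ} (hf : ∀ x, HasDerivAt f (f' x) x)
    (hf' : Continuous f') : ContDiff ℝ 1 f := by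
  rw [contDiff_one_iff_deriv]
  refine ⟨fun x => (hf x).differentiableAt, ?_⟩
  rwa [show deriv f = f' from funext fun x => (hf x).deriv]

theorem integral_congr_Icc {a b : ℝ} (hab : a ≤ b) {f g : ℝ → ℝ} (h : EqOn f g (Icc a b)) :
    ∫ x in a..b, f x = ∫ x in a..b, g x :=
  integral_congr (by rwa [uIcc_of_le hab])

theorem integral_deriv_mul_eq_neg_integral_mul_deriv {a b : ℝ} {f f' g g' : ℝ → ℝ}
    (hf : ∀ x, HasDerivAt f (f' x) x) (hg : ∀ x, HasDerivAt g (g' x) x)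
    (hf' : Continuous f') (hg' : Continuous g') (ha : f a = 0) (hb : f b = 0) :
    ∫ x in a..b, f' x * g x = -∫ x in a..b, f x * g' x := by
  rw [integral_mul_deriv_eq_deriv_mul (fun x _ => hf x) (fun x _ => hg x)
    (hf'.intervalIntegrable _ _) (hg'.intervalIntegrable _ _), ha, hb]
  ring

/-- du Bois-Reymond lemma. -/
theorem exists_eqOn_const_of_integral_mul_deriv_eq_zero {a b : ℝ} (hab : a < b) {G : ℝ → ℝ}
    (hG : Continuous G)
    (h : ∀ φ : ℝ → ℝ, ContDiff ℝ 1 φ → φ a = 0 → φ b = 0 → ∫ x in a..b, G x * deriv φ x = 0) :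
    ∃ c, EqOn G (fun _ => c) (Icc a b) := by
  set c := (∫ x in a..b, G x) / (b - a)
  refine ⟨c, fun x hx => ?_⟩
  have hGc : Continuous fun x => G x - c := by fun_prop
  set φ : ℝ → ℝ := fun y => ∫ x in a..y, (G x - c)
  have hφ' : ∀ x, HasDerivAt φ (G x - c) x := fun x =>
    (hGc.integral_hasStrictDerivAt a x).hasDerivAt
  have hφb : φ b = 0 := by
    simp only [φ]
    rw [integral_sub (hG.intervalIntegrable _ _) intervalIntegrable_const, integral_const,
      smul_eq_mul]
    have hc : c * (b - a) = ∫ x in a..b, G x := div_mul_cancel₀ _ (sub_ne_zero.2 hab.ne')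
    linear_combination -hc
  have horth : ∫ x in a..b, G x * (G x - c) = 0 := by
    simpa [show deriv φ = fun x => G x - c from funext fun x => (hφ' x).deriv] using
      h φ (contDiff_one_of_hasDerivAt hφ' hGc) integral_same hφb
  have hsq : ∫ x in a..b, (G x - c) ^ 2 = 0 := by
    have hsplit : ∀ x, (G x - c) ^ 2 = G x * (G x - c) - c * (G x - c) := fun x => by ring
    simp only [hsplit]
    rw [integral_sub (by apply Continuous.intervalIntegrable; fun_prop)
      (by apply Continuous.intervalIntegrable; fun_prop), integral_const_mul, horth]
    simp only [φ] at hφb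
    rw [hφb, mul_zero, sub_zero]
  have := eqOn_zero_of_integral_eq_zero hab (hGc.pow 2) (fun x => sq_nonneg _) hsq hx
  simpa [sub_eq_zero] using this

theorem integral_add_mul_sq_mul {a b t : ℝ} {f g ρ : ℝ → ℝ} (hf : Continuous f)
    (hg : Continuous g) (hρ : Continuous ρ) :
    ∫ x in a..b, (f x + t * g x) ^ 2 * ρ x = (∫ x in a..b, f x ^ 2 * ρ x)
      + 2 * t * (∫ x in a..b, f x * g x * ρ x) + t ^ 2 * ∫ x in a..b, g x ^ 2 * ρ x := by
  rw [← integral_const_mul, ← integral_const_mul, ← integral_add, ← integral_add]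
  · exact integral_congr fun x _ => by ring
  all_goals apply Continuous.intervalIntegrable; fun_prop

/-- First variation of a weighted Rayleigh quotient at a minimizer; `u'`, `φ'` play the role
of the derivatives of `u`, `φ`. -/
theorem integral_mul_eq_of_forall_le {a b μ : ℝ} {ρ u u' φ φ' : ℝ → ℝ} (hρ : Continuous ρ)
    (hu : Continuous u) (hu' : Continuous u') (hφ : Continuous φ) (hφ' : Continuous φ')
    (heq : ∫ x in a..b, u' x ^ 2 * ρ x = μ * ∫ x in a..b, u x ^ 2 * ρ x)
    (hle : ∀ t : ℝ, μ * ∫ x in a..b, (u x + t * φ x) ^ 2 * ρ x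
      ≤ ∫ x in a..b, (u' x + t * φ' x) ^ 2 * ρ x) :
    ∫ x in a..b, u' x * φ' x * ρ x = μ * ∫ x in a..b, u x * φ x * ρ x := by
  set β := (∫ x in a..b, u' x * φ' x * ρ x) - μ * ∫ x in a..b, u x * φ x * ρ x
  set κ := (∫ x in a..b, φ' x ^ 2 * ρ x) - μ * ∫ x in a..b, φ x ^ 2 * ρ x
  have hmin : IsLocalMin (fun t : ℝ => 2 * t * β + t ^ 2 * κ) 0 :=
    Filter.Eventually.of_forall fun t => by
      have := hle t
      rw [integral_add_mul_sq_mul hu hφ hρ, integral_add_mul_sq_mul hu' hφ' hρ] at this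
      linear_combination this + heq
  have hq : HasDerivAt (fun t : ℝ => 2 * t * β + t ^ 2 * κ) (2 * β) 0 :=
    ((((hasDerivAt_id (0 : ℝ)).const_mul 2).mul_const β).add
      (((hasDerivAt_id (0 : ℝ)).pow 2).mul_const κ)).congr_deriv (by simp)
  linarith [hmin.hasDerivAt_eq_zero hq]

theorem deriv_add_const_mul {u φ : ℝ → ℝ} (hu : Differentiable ℝ u) (hφ : Differentiable ℝ φ)
    (t : ℝ) : deriv (fun x => u x + t * φ x) = fun x => deriv u x + t * deriv φ x :=
  funext fun x => (((hu x).hasDerivAt).add ((hφ x).hasDerivAt.const_mul t)).deriv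

noncomputable def gauss (x : ℝ) : ℝ := Real.exp (-x ^ 2 / 2)

theorem gauss_pos (x : ℝ) : 0 < gauss x := Real.exp_pos _

@[fun_prop]
theorem continuous_gauss : Continuous gauss := by
  unfold gauss; fun_prop

theorem hasDerivAt_gauss (x : ℝ) : HasDerivAt gauss (-x * gauss x) x :=
  (((hasDerivAt_id x).pow 2).neg.div_const 2).exp.congr_deriv (by simp [gauss]; ring)

theorem HasDerivAt.mul_gauss {f : ℝ → ℝ} {f' x : ℝ} (hf : HasDerivAt f f' x) :
    HasDerivAt (fun y => f y * gauss y) ((f' - x * f x) * gauss x) x :=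
  (hf.mul (hasDerivAt_gauss x)).congr_deriv (by ring)

theorem integral_sq_mul_gauss_nonneg {a b : ℝ} (hab : a ≤ b) (f : ℝ → ℝ) :
    0 ≤ ∫ x in a..b, f x ^ 2 * gauss x :=
  integral_nonneg hab fun x _ => mul_nonneg (sq_nonneg _) (gauss_pos x).le

theorem integral_gauss_pos {a b : ℝ} (hab : a < b) : 0 < ∫ x in a..b, gauss x :=
  intervalIntegral_pos_of_pos (continuous_gauss.intervalIntegrable a b) gauss_pos hab

/-- `x - d/dx` is the adjoint of `d/dx` in `L²(γ)` on functions vanishing at `a` and `b`. -/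
theorem integral_mul_mul_sub_deriv_mul_gauss {a b : ℝ} {g g' v : ℝ → ℝ}
    (hg : ∀ x, HasDerivAt g (g' x) x) (hg' : Continuous g') (hv : ContDiff ℝ 1 v)
    (hva : v a = 0) (hvb : v b = 0) :
    ∫ x in a..b, g x * ((x * v x - deriv v x) * gauss x)
      = ∫ x in a..b, g' x * (v x * gauss x) := by
  have hvc := hv.continuous
  have hv'c := hv.continuous_deriv le_rfl
  calc ∫ x in a..b, g x * ((x * v x - deriv v x) * gauss x)
      = -∫ x in a..b, (deriv v x - x * v x) * gauss x * g x := by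
        rw [← integral_neg]
        exact integral_congr fun x _ => by ring
    _ = ∫ x in a..b, v x * gauss x * g' x := by
        rw [integral_deriv_mul_eq_neg_integral_mul_deriv
          (fun x => (hv.differentiable one_ne_zero x).hasDerivAt.mul_gauss) hg (by fun_prop) hg'
          (by simp [hva]) (by simp [hvb]), neg_neg]
    _ = ∫ x in a..b, g' x * (v x * gauss x) := integral_congr fun x _ => mul_comm _ _

theorem integral_mul_deriv_mul_gauss_of_hasDerivAt {a b μ : ℝ} {V f φ : ℝ → ℝ}
    (hV : ∀ x, HasDerivAt V (x * V x - μ * f x) x) (hf : Continuous f) (hφ : ContDiff ℝ 1 φ) :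
    ∫ x in a..b, V x * deriv φ x * gauss x
      = V b * gauss b * φ b - V a * gauss a * φ a + μ * ∫ x in a..b, f x * φ x * gauss x := by
  have hVγ : ∀ x, HasDerivAt (fun y => V y * gauss y) (-(μ * f x * gauss x)) x := fun x =>
    (hV x).mul_gauss.congr_deriv (by ring)
  rw [integral_congr fun x _ => (mul_right_comm (V x) (deriv φ x) (gauss x)),
    integral_mul_deriv_eq_deriv_mul (fun x _ => hVγ x)
      (fun x _ => (hφ.differentiable one_ne_zero x).hasDerivAt)
      (by apply Continuous.intervalIntegrable; fun_prop)
      ((hφ.continuous_deriv le_rfl).intervalIntegrable _ _), ← integral_const_mul,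
    ← sub_neg_eq_add, ← integral_neg]
  exact congrArg _ (integral_congr fun x _ => by ring)

/-- Natural boundary conditions: test functions need not vanish at `a` and `b`. -/
theorem eq_zero_of_forall_integral_mul_deriv_mul_gauss_eq {a b μ : ℝ} (hab : a ≠ b)
    {V f : ℝ → ℝ} (hV : ∀ x, HasDerivAt V (x * V x - μ * f x) x) (hf : Continuous f)
    (h : ∀ φ : ℝ → ℝ, ContDiff ℝ 1 φ →
      ∫ x in a..b, V x * deriv φ x * gauss x = μ * ∫ x in a..b, f x * φ x * gauss x) :
    V a = 0 ∧ V b = 0 := by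
  have hbdry : ∀ φ : ℝ → ℝ, ContDiff ℝ 1 φ → V b * gauss b * φ b = V a * gauss a * φ a :=
    fun φ hφ => by
      have := h φ hφ
      rw [integral_mul_deriv_mul_gauss_of_hasDerivAt hV hf hφ] at this
      linarith
  have ha := hbdry (fun x => x - b) (contDiff_id.sub contDiff_const)
  have hb := hbdry (fun x => x - a) (contDiff_id.sub contDiff_const)
  simp only [sub_self, mul_zero] at ha hb
  have hγa := (gauss_pos a).ne'
  have hγb := (gauss_pos b).ne'
  have hab' := sub_ne_zero.2 hab
  have hba' := sub_ne_zero.2 hab.symm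
  constructor
  · simpa [hγa, hab'] using ha.symm
  · simpa [hγb, hba'] using hb

/-- The hypothesis is the weak form of `-(U γ)' = μ f γ` on `[a, b]`. -/
theorem exists_hasDerivAt_eqOn_of_weak_eq {a b μ : ℝ} (hab : a < b) {U f : ℝ → ℝ}
    (hU : Continuous U) (hf : Continuous f)
    (h : ∀ φ : ℝ → ℝ, ContDiff ℝ 1 φ → φ a = 0 → φ b = 0 →
      ∫ x in a..b, U x * deriv φ x * gauss x = μ * ∫ x in a..b, f x * φ x * gauss x) :
    ∃ V : ℝ → ℝ, (∀ x, HasDerivAt V (x * V x - μ * f x) x) ∧ EqOn V U (Icc a b) := by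
  have hfγ : Continuous fun x => μ * f x * gauss x := by fun_prop
  set P : ℝ → ℝ := fun y => ∫ x in a..y, μ * f x * gauss x
  have hP : ∀ x, HasDerivAt P (μ * f x * gauss x) x := fun x =>
    (hfγ.integral_hasStrictDerivAt a x).hasDerivAt
  have hPc : Continuous P := Differentiable.continuous fun x => (hP x).differentiableAt
  obtain ⟨c, hc⟩ := exists_eqOn_const_of_integral_mul_deriv_eq_zero hab
    (G := fun x => U x * gauss x + P x) (by fun_prop) fun φ hφ hφa hφb => by
      have hφ' := hφ.continuous_deriv le_rfl
      have hparts := integral_mul_deriv_eq_deriv_mul (a := a) (b := b) (fun x _ => hP x)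
        (fun x _ => (hφ.differentiable one_ne_zero x).hasDerivAt)
        (hfγ.intervalIntegrable _ _) (hφ'.intervalIntegrable _ _)
      have hPφ : ∫ x in a..b, P x * deriv φ x = -(μ * ∫ x in a..b, f x * φ x * gauss x) := by
        rw [hparts, hφa, hφb, ← integral_const_mul]
        simp only [mul_zero, sub_zero, zero_sub]
        exact congrArg _ (integral_congr fun x _ => by ring)
      have hsplit : ∫ x in a..b, (U x * gauss x + P x) * deriv φ x
          = (∫ x in a..b, U x * deriv φ x * gauss x) + ∫ x in a..b, P x * deriv φ x := by
        rw [← integral_add (by apply Continuous.intervalIntegrable; fun_prop)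
          (by apply Continuous.intervalIntegrable; fun_prop)]
        exact integral_congr fun x _ => by ring
      rw [hsplit, hPφ, h φ hφ hφa hφb, add_neg_cancel]
  refine ⟨fun x => (c - P x) / gauss x, fun x => ?_, fun x hx => ?_⟩
  · refine (((hasDerivAt_const x c).sub (hP x)).div (hasDerivAt_gauss x)
      (gauss_pos x).ne').congr_deriv ?_
    have hγ := (gauss_pos x).ne'
    simp only [Pi.sub_apply]
    field_simp
    ring
  · have := hc hx
    simp only at this
    show (c - P x) / gauss x = U x
    rw [← this, add_sub_cancel_right, mul_div_cancel_right₀ _ (gauss_pos x).ne']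

noncomputable def rayleigh (a b : ℝ) (u : ℝ → ℝ) : ℝ :=
  (∫ x in a..b, deriv u x ^ 2 * gauss x) / ∫ x in a..b, u x ^ 2 * gauss x

def neumannQuotients (a b : ℝ) : Set ℝ :=
  {q | ∃ u : ℝ → ℝ, ContDiff ℝ 1 u ∧ ∫ x in a..b, u x * gauss x = 0 ∧
    ∫ x in a..b, u x ^ 2 * gauss x ≠ 0 ∧ q = rayleigh a b u}

def dirichletQuotients (a b : ℝ) : Set ℝ :=
  {q | ∃ v : ℝ → ℝ, ContDiff ℝ 1 v ∧ v a = 0 ∧ v b = 0 ∧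
    ∫ x in a..b, v x ^ 2 * gauss x ≠ 0 ∧ q = rayleigh a b v}

section Rayleigh

variable {a b μ : ℝ}

theorem rayleigh_nonneg (hab : a ≤ b) (u : ℝ → ℝ) : 0 ≤ rayleigh a b u :=
  div_nonneg (integral_sq_mul_gauss_nonneg hab _) (integral_sq_mul_gauss_nonneg hab _)

theorem integral_deriv_sq_eq_of_eq_rayleigh {u : ℝ → ℝ} (h : μ = rayleigh a b u)
    (hu : ∫ x in a..b, u x ^ 2 * gauss x ≠ 0) :
    ∫ x in a..b, deriv u x ^ 2 * gauss x = μ * ∫ x in a..b, u x ^ 2 * gauss x := by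
  rw [h, rayleigh, div_mul_cancel₀ _ hu]

theorem mul_integral_sq_le_of_le_rayleigh {u : ℝ → ℝ} (hab : a ≤ b)
    (h : ∫ x in a..b, u x ^ 2 * gauss x ≠ 0 → μ ≤ rayleigh a b u) :
    μ * ∫ x in a..b, u x ^ 2 * gauss x ≤ ∫ x in a..b, deriv u x ^ 2 * gauss x := by
  by_cases hu : ∫ x in a..b, u x ^ 2 * gauss x = 0
  · rw [hu, mul_zero]
    exact integral_sq_mul_gauss_nonneg hab _
  · exact (le_div_iff₀ ((integral_sq_mul_gauss_nonneg hab u).lt_of_ne' hu)).1 (h hu)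

end Rayleigh

theorem integral_deriv_mul_deriv_eq_of_mem_lowerBounds_dirichletQuotients {a b μ : ℝ}
    (hab : a ≤ b) (hμ : μ ∈ lowerBounds (dirichletQuotients a b)) {v : ℝ → ℝ}
    (hv : ContDiff ℝ 1 v) (hva : v a = 0) (hvb : v b = 0)
    (heq : ∫ x in a..b, deriv v x ^ 2 * gauss x = μ * ∫ x in a..b, v x ^ 2 * gauss x) :
    ∀ φ : ℝ → ℝ, ContDiff ℝ 1 φ → φ a = 0 → φ b = 0 →
      ∫ x in a..b, deriv v x * deriv φ x * gauss x = μ * ∫ x in a..b, v x * φ x * gauss x := by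
  intro φ hφ hφa hφb
  refine integral_mul_eq_of_forall_le continuous_gauss hv.continuous
    (hv.continuous_deriv le_rfl) hφ.continuous (hφ.continuous_deriv le_rfl) heq fun t => ?_
  have h := mul_integral_sq_le_of_le_rayleigh (u := fun x => v x + t * φ x) hab fun hne =>
    hμ ⟨_, hv.add (contDiff_const.mul hφ), by simp [hva, hφa], by simp [hvb, hφb], hne, rfl⟩
  rwa [deriv_add_const_mul (hv.differentiable one_ne_zero) (hφ.differentiable one_ne_zero)] at h

theorem integral_deriv_mul_deriv_eq_of_mem_lowerBounds_neumannQuotients {a b μ : ℝ}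
    (hab : a < b) (hμ : μ ∈ lowerBounds (neumannQuotients a b)) {u : ℝ → ℝ}
    (hu : ContDiff ℝ 1 u) (hmean : ∫ x in a..b, u x * gauss x = 0)
    (heq : ∫ x in a..b, deriv u x ^ 2 * gauss x = μ * ∫ x in a..b, u x ^ 2 * gauss x) :
    ∀ φ : ℝ → ℝ, ContDiff ℝ 1 φ →
      ∫ x in a..b, deriv u x * deriv φ x * gauss x = μ * ∫ x in a..b, u x * φ x * gauss x := by
  intro φ hφ
  -- subtracting its Gaussian mean `m` makes `φ` an admissible direction
  set m := (∫ x in a..b, φ x * gauss x) / ∫ x in a..b, gauss x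
  have hψ : ContDiff ℝ 1 fun x => φ x - m := hφ.sub contDiff_const
  have hψ' : deriv (fun x => φ x - m) = deriv φ := funext fun x => deriv_sub_const ..
  have hψmean : ∫ x in a..b, (φ x - m) * gauss x = 0 := by
    simp only [sub_mul]
    rw [integral_sub (by apply Continuous.intervalIntegrable; fun_prop)
      (by apply Continuous.intervalIntegrable; fun_prop), integral_const_mul,
      div_mul_cancel₀ _ (integral_gauss_pos hab).ne', sub_self]
  have hvar := integral_mul_eq_of_forall_le continuous_gauss hu.continuous
    (hu.continuous_deriv le_rfl) hψ.continuous (hφ.continuous_deriv le_rfl) heq fun t => by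
      have h := mul_integral_sq_le_of_le_rayleigh (u := fun x => u x + t * (φ x - m)) hab.le
        fun hne => hμ ⟨_, hu.add (contDiff_const.mul hψ), ?_, hne, rfl⟩
      · rwa [deriv_add_const_mul (hu.differentiable one_ne_zero)
          (hψ.differentiable one_ne_zero), hψ'] at h
      rw [integral_congr fun x _ => add_mul (u x) (t * (φ x - m)) (gauss x), integral_add
        (by apply Continuous.intervalIntegrable; fun_prop)
        (by apply Continuous.intervalIntegrable; fun_prop), hmean]
      simp only [mul_assoc, integral_const_mul, hψmean, mul_zero, add_zero]
  rw [hvar]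
  simp only [mul_sub, sub_mul]
  rw [integral_sub (by apply Continuous.intervalIntegrable; fun_prop)
    (by apply Continuous.intervalIntegrable; fun_prop)]
  simp only [mul_comm (u _) m, mul_assoc, integral_const_mul, hmean, mul_zero, sub_zero]

theorem integral_deriv_sq_mul_gauss_ne_zero {a b : ℝ} (hab : a < b) {u : ℝ → ℝ}
    (hu : ContDiff ℝ 1 u) (hmean : ∫ x in a..b, u x * gauss x = 0)
    (hD : ∫ x in a..b, u x ^ 2 * gauss x ≠ 0) :
    ∫ x in a..b, deriv u x ^ 2 * gauss x ≠ 0 := by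
  intro h0
  have hu' : EqOn (deriv u) 0 (Icc a b) := fun x hx => by
    have := eqOn_zero_of_integral_eq_zero hab
      ((hu.continuous_deriv le_rfl).pow 2 |>.mul continuous_gauss)
      (fun x => mul_nonneg (sq_nonneg _) (gauss_pos x).le) h0 hx
    simpa [(gauss_pos x).ne'] using this
  have hconst : EqOn u (fun _ => u a) (Icc a b) :=
    constant_of_has_deriv_right_zero hu.continuous.continuousOn fun x hx =>
      (((hu.differentiable one_ne_zero x).hasDerivAt).congr_deriv
        (hu' (Ico_subset_Icc_self hx))).hasDerivWithinAt
  have hua : u a = 0 := by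
    rw [integral_congr_Icc hab.le fun x hx => by rw [hconst hx], integral_const_mul] at hmean
    exact (mul_eq_zero.1 hmean).resolve_right (integral_gauss_pos hab).ne'
  apply hD
  rw [integral_congr_Icc hab.le (g := fun _ => 0) fun x hx => by simp [hconst hx, hua]]
  simp

theorem integral_deriv_sq_mul_gauss_eq_of_hasDerivAt {a b μ : ℝ} (hab : a ≤ b) {u v : ℝ → ℝ}
    (hu : ContDiff ℝ 1 u) (hv : ∀ x, HasDerivAt v (x * v x - μ * u x) x)
    (hvu : EqOn v (deriv u) (Icc a b)) (hva : v a = 0) (hvb : v b = 0) :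
    ∫ x in a..b, deriv v x ^ 2 * gauss x = (μ - 1) * ∫ x in a..b, v x ^ 2 * gauss x := by
  have huc := hu.continuous
  have hu'c := hu.continuous_deriv le_rfl
  have hvc : Continuous v := Differentiable.continuous fun x => (hv x).differentiableAt
  -- the flux `v' γ` satisfies `(v' γ)' = (1 - μ) v γ` on `[a, b]`
  have hflux : ∀ x, HasDerivAt (fun y => (y * v y - μ * u y) * gauss y)
      ((v x - μ * deriv u x) * gauss x) x := fun x =>
    (((hasDerivAt_id' x).mul (hv x)).sub
      ((hu.differentiable one_ne_zero x).hasDerivAt.const_mul μ)).mul_gauss.congr_deriv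
      (by simp only [Pi.sub_apply, Pi.mul_apply]; ring)
  simp only [show deriv v = fun x => x * v x - μ * u x from funext fun x => (hv x).deriv]
  calc ∫ x in a..b, (x * v x - μ * u x) ^ 2 * gauss x
      = ∫ x in a..b, (x * v x - μ * u x) * ((x * v x - μ * u x) * gauss x) :=
        integral_congr fun x _ => by ring
    _ = -∫ x in a..b, v x * ((v x - μ * deriv u x) * gauss x) :=
        integral_deriv_mul_eq_neg_integral_mul_deriv hv hflux (by fun_prop) (by fun_prop) hva hvb
    _ = -∫ x in a..b, (1 - μ) * (v x ^ 2 * gauss x) := by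
        congr 1
        exact integral_congr_Icc hab fun x hx => by simp only [← hvu hx]; ring
    _ = (μ - 1) * ∫ x in a..b, v x ^ 2 * gauss x := by
        rw [integral_const_mul]; ring

theorem sub_one_mem_dirichletQuotients {a b μ : ℝ} (hab : a < b)
    (hμ : IsLeast (neumannQuotients a b) μ) : μ - 1 ∈ dirichletQuotients a b := by
  obtain ⟨⟨u, hu, hmean, hD, hq⟩, hlow⟩ := hμ
  have heq := integral_deriv_sq_eq_of_eq_rayleigh hq hD
  have hweak :=
    integral_deriv_mul_deriv_eq_of_mem_lowerBounds_neumannQuotients hab hlow hu hmean heq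
  have hu' := hu.continuous_deriv le_rfl
  -- `v` is `u'`, which is more regular than `u` since `u'' = x u' - μ u` weakly
  obtain ⟨v, hv', hvu⟩ := exists_hasDerivAt_eqOn_of_weak_eq hab hu' hu.continuous
    fun φ hφ _ _ => hweak φ hφ
  have hvc : Continuous v := Differentiable.continuous fun x => (hv' x).differentiableAt
  have hv : ContDiff ℝ 1 v := contDiff_one_of_hasDerivAt hv' (by fun_prop)
  obtain ⟨hva, hvb⟩ := eq_zero_of_forall_integral_mul_deriv_mul_gauss_eq hab.ne hv' hu.continuous
    fun φ hφ => (integral_congr_Icc hab.le fun x hx => by simp [hvu hx]).trans (hweak φ hφ)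
  have hnorm : ∫ x in a..b, v x ^ 2 * gauss x = ∫ x in a..b, deriv u x ^ 2 * gauss x :=
    integral_congr_Icc hab.le fun x hx => by simp [hvu hx]
  have hne := hnorm ▸ integral_deriv_sq_mul_gauss_ne_zero hab hu hmean hD
  have henergy := integral_deriv_sq_mul_gauss_eq_of_hasDerivAt hab.le hu hv' hvu hva hvb
  exact ⟨v, hv, hva, hvb, hne, by rw [rayleigh, henergy, mul_div_cancel_right₀ _ hne]⟩

theorem add_one_mem_neumannQuotients {a b lam : ℝ} (hab : a < b)
    (hlam : IsLeast (dirichletQuotients a b) lam) : lam + 1 ∈ neumannQuotients a b := by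
  obtain ⟨⟨v, hv, hva, hvb, hD, hq⟩, hlow⟩ := hlam
  have heq := integral_deriv_sq_eq_of_eq_rayleigh hq hD
  have hvc := hv.continuous
  obtain ⟨V, hV', hVv⟩ := exists_hasDerivAt_eqOn_of_weak_eq hab (hv.continuous_deriv le_rfl) hvc
    (integral_deriv_mul_deriv_eq_of_mem_lowerBounds_dirichletQuotients hab.le hlow hv hva hvb heq)
  have hVc : Continuous V := Differentiable.continuous fun x => (hV' x).differentiableAt
  -- `w = x v - v'`, and `w' = (1 + λ) v` because `v'' = x v' - λ v`
  set w : ℝ → ℝ := fun x => x * v x - V x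
  have hw' : ∀ x, HasDerivAt w (v x + x * deriv v x - (x * V x - lam * v x)) x := fun x =>
    (((hasDerivAt_id' x).mul (hv.differentiable one_ne_zero x).hasDerivAt).sub
      (hV' x)).congr_deriv (by ring)
  have hw : ContDiff ℝ 1 w := contDiff_one_of_hasDerivAt hw' (by fun_prop)
  have hdw : EqOn (deriv w) (fun x => (1 + lam) * v x) (Icc a b) := fun x hx => by
    simp only [(hw' x).deriv, hVv hx]
    ring
  have hwγ : ∀ g : ℝ → ℝ, ∫ x in a..b, g x * (w x * gauss x)
      = ∫ x in a..b, g x * ((x * v x - deriv v x) * gauss x) :=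
    fun g => integral_congr_Icc hab.le fun x hx => by simp only [w, hVv hx]
  have hmean : ∫ x in a..b, w x * gauss x = 0 := by
    simpa using (hwγ fun _ => 1).trans (integral_mul_mul_sub_deriv_mul_gauss
      (fun x => hasDerivAt_const x (1 : ℝ)) continuous_const hv hva hvb)
  have hnorm : ∫ x in a..b, w x ^ 2 * gauss x = (1 + lam) * ∫ x in a..b, v x ^ 2 * gauss x := by
    calc ∫ x in a..b, w x ^ 2 * gauss x
        = ∫ x in a..b, deriv w x * (v x * gauss x) := by
          rw [← integral_mul_mul_sub_deriv_mul_gauss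
            (fun x => (hw.differentiable one_ne_zero x).hasDerivAt) (hw.continuous_deriv le_rfl)
            hv hva hvb, ← hwγ]
          exact integral_congr fun x _ => by ring
      _ = (1 + lam) * ∫ x in a..b, v x ^ 2 * gauss x := by
          rw [← integral_const_mul]
          exact integral_congr_Icc hab.le fun x hx => by simp only [hdw hx]; ring
  have henergy : ∫ x in a..b, deriv w x ^ 2 * gauss x
      = (1 + lam) ^ 2 * ∫ x in a..b, v x ^ 2 * gauss x := by
    rw [← integral_const_mul]
    exact integral_congr_Icc hab.le fun x hx => by simp only [hdw hx]; ring
  have hne : ∫ x in a..b, w x ^ 2 * gauss x ≠ 0 := by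
    rw [hnorm]
    exact mul_ne_zero (by linarith [hq ▸ rayleigh_nonneg hab.le v]) hD
  refine ⟨w, hw, hmean, hne, ?_⟩
  rw [rayleigh, henergy, sq, mul_assoc, ← hnorm, mul_div_cancel_right₀ _ hne, add_comm]

theorem neumann_eq_dirichlet_add_one (a b : ℝ) (hab : a < b) (μ₁ lam₁ : ℝ)
    (hμ : IsLeast { q : ℝ | ∃ u : ℝ → ℝ, ContDiff ℝ 1 u ∧
        (∫ x in (a)..(b), u x * Real.exp (-x ^ 2 / 2)) = 0 ∧
        (∫ x in (a)..(b), (u x) ^ 2 * Real.exp (-x ^ 2 / 2)) ≠ 0 ∧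
        q = (∫ x in (a)..(b), (deriv u x) ^ 2 * Real.exp (-x ^ 2 / 2)) /
            (∫ x in (a)..(b), (u x) ^ 2 * Real.exp (-x ^ 2 / 2)) } μ₁)
    (hlam : IsLeast { q : ℝ | ∃ v : ℝ → ℝ, ContDiff ℝ 1 v ∧
        v a = 0 ∧ v b = 0 ∧
        (∫ x in (a)..(b), (v x) ^ 2 * Real.exp (-x ^ 2 / 2)) ≠ 0 ∧
        q = (∫ x in (a)..(b), (deriv v x) ^ 2 * Real.exp (-x ^ 2 / 2)) /
            (∫ x in (a)..(b), (v x) ^ 2 * Real.exp (-x ^ 2 / 2)) } lam₁) :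
    μ₁ = lam₁ + 1 := by
  have hμ' : IsLeast (neumannQuotients a b) μ₁ := hμ
  have hlam' : IsLeast (dirichletQuotients a b) lam₁ := hlam
  have h₁ : lam₁ ≤ μ₁ - 1 := hlam'.2 (sub_one_mem_dirichletQuotients hab hμ')
  have h₂ : μ₁ ≤ lam₁ + 1 := hμ'.2 (add_one_mem_neumannQuotients hab hlam')
  linarith
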